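/- Let h : [0,R] → [0,∞) be continuous, α ∈ (1,2], σ > 0, and suppose v : [0,R] → ℝ is continuous with v(0) = 0, v(s) ≥ 0 on [0,R], satisfying the integral equation v(r) = (2/(σ² r^{N-1})) ∫₀^r s^{N-1} ( ((α-1)/α^{α/(α-1)}) v(s)^{α/(α-1)} - h(s) ) ds for r ∈ (0,R]. Then v satisfies v(r) ≤ (2/(σ² r^{N-1})) ∫₀^r s^{N-1} ((α-1)/α^{α/(α-1)}) v(s)^{α/(α-1)} ds for r ∈ (0,R], and if additionally h ≡ 0 then v ≡ 0 on [0,R]. -/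

import Mathlib

open Set MeasureTheory intervalIntegral

theorem stmt6 (N : ℕ) (hN : 1 ≤ N) (R σ α : ℝ) (hR : 0 < R) (hσ : 0 < σ)
    (hα1 : 1 < α) (hα2 : α ≤ 2)
    (h : ℝ → ℝ) (hh : ContinuousOn h (Set.Icc 0 R)) (hhnn : ∀ s ∈ Set.Icc 0 R, 0 ≤ h s)
    (v : ℝ → ℝ) (hv : ContinuousOn v (Set.Icc 0 R)) (hv0 : v 0 = 0)
    (hvnn : ∀ s ∈ Set.Icc 0 R, 0 ≤ v s)
    (heq : ∀ r ∈ Set.Ioc 0 R,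
      v r = (2 / (σ ^ 2 * r ^ (N - 1))) *
        ∫ s in (0:ℝ)..r,
          s ^ (N - 1) * (((α - 1) / α ^ (α / (α - 1))) * v s ^ (α / (α - 1)) - h s)) :
    (∀ r ∈ Set.Ioc 0 R,
      v r ≤ (2 / (σ ^ 2 * r ^ (N - 1))) *
        ∫ s in (0:ℝ)..r,
          s ^ (N - 1) * (((α - 1) / α ^ (α / (α - 1))) * v s ^ (α / (α - 1)))) ∧
    ((∀ s ∈ Set.Icc 0 R, h s = 0) → ∀ r ∈ Set.Icc 0 R, v r = 0) := by
  have hα0 : (0:ℝ) < α := by linarith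
  have hα1' : (0:ℝ) < α - 1 := by linarith
  set β := α / (α - 1) with hβ
  have hβpos : 0 < β := div_pos hα0 hα1'
  have hβ1 : 1 ≤ β := (one_le_div hα1').mpr (by linarith)
  set K := (α - 1) / α ^ β with hKdef
  have hKpos : 0 < K := div_pos hα1' (Real.rpow_pos_of_pos hα0 β)
  have hσ2 : (0:ℝ) < σ ^ 2 := by positivity
  have hrpc : Continuous fun x : ℝ => x ^ β := Real.continuous_rpow_const hβpos.le
  -- continuity of key integrands on Icc 0 R
  have hg2 : ContinuousOn (fun s : ℝ => s ^ (N - 1) * (K * v s ^ β)) (Icc 0 R) :=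
    (continuousOn_pow _).mul (continuousOn_const.mul (hrpc.comp_continuousOn hv))
  have hg1 : ContinuousOn (fun s : ℝ => s ^ (N - 1) * (K * v s ^ β - h s)) (Icc 0 R) :=
    (continuousOn_pow _).mul ((continuousOn_const.mul (hrpc.comp_continuousOn hv)).sub hh)
  have hint : ∀ g : ℝ → ℝ, ContinuousOn g (Icc 0 R) → ∀ r ∈ Ioc (0:ℝ) R,
      IntervalIntegrable g volume 0 r := by
    intro g hg r hr
    apply ContinuousOn.intervalIntegrable
    rw [uIcc_of_le hr.1.le]
    exact hg.mono (Icc_subset_Icc le_rfl hr.2)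
  -- Part 1
  have part1 : ∀ r ∈ Set.Ioc 0 R,
      v r ≤ (2 / (σ ^ 2 * r ^ (N - 1))) *
        ∫ s in (0:ℝ)..r, s ^ (N - 1) * (K * v s ^ β) := by
    intro r hr
    rw [heq r hr]
    have hcoef : 0 ≤ 2 / (σ ^ 2 * r ^ (N - 1)) := by
      have : (0:ℝ) < r ^ (N - 1) := pow_pos hr.1 _
      positivity
    apply mul_le_mul_of_nonneg_left _ hcoef
    apply intervalIntegral.integral_mono_on hr.1.le (hint _ hg1 r hr) (hint _ hg2 r hr)
    intro s hs
    have h1 : 0 ≤ h s := hhnn s ⟨hs.1, hs.2.trans hr.2⟩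
    have h2 : (0:ℝ) ≤ s ^ (N - 1) := pow_nonneg hs.1 _
    nlinarith [mul_nonneg h2 h1]
  constructor
  · exact part1
  -- Part 2
  intro hh0
  -- clamp and extension
  set c : ℝ → ℝ := fun t => max 0 (min t R) with hcdef
  have hcmem : ∀ t, c t ∈ Icc (0:ℝ) R := fun t =>
    ⟨le_max_left _ _, max_le hR.le (min_le_right _ _)⟩
  have hccont : Continuous c := continuous_const.max (continuous_id.min continuous_const)
  set w : ℝ → ℝ := fun t => v (c t) with hwdef
  have hwcont : Continuous w := hv.comp_continuous hccont hcmem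
  have hweq : ∀ t ∈ Icc (0:ℝ) R, w t = v t := by
    intro t ht
    simp only [hwdef, hcdef]
    rw [min_eq_left ht.2, max_eq_right ht.1]
  have hwnn : ∀ t, 0 ≤ w t := fun t => hvnn _ (hcmem t)
  set F : ℝ → ℝ := fun t => ∫ s in (0:ℝ)..t, w s with hFdef
  have hFd : ∀ t : ℝ, HasDerivAt F (w t) t := fun t =>
    intervalIntegral.integral_hasDerivAt_right (hwcont.intervalIntegrable _ _)
      (hwcont.stronglyMeasurableAtFilter _ _) hwcont.continuousAt
  have hFcont : Continuous F := by
    rw [continuous_iff_continuousAt]; exact fun t => (hFd t).continuousAt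
  have hFnn : ∀ t ∈ Icc (0:ℝ) R, 0 ≤ F t := by
    intro t ht
    exact intervalIntegral.integral_nonneg ht.1 (fun s _ => hwnn s)
  -- bound M
  obtain ⟨C, hC⟩ := isCompact_Icc.exists_bound_of_continuousOn hv
  set M := max C 1 with hMdef
  have hM1 : (1:ℝ) ≤ M := le_max_right _ _
  have hM0 : (0:ℝ) < M := lt_of_lt_of_le one_pos hM1
  have hvM : ∀ s ∈ Icc (0:ℝ) R, v s ≤ M := by
    intro s hs
    calc v s ≤ |v s| := le_abs_self _
    _ ≤ C := by simpa using hC s hs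
    _ ≤ M := le_max_left _ _
  have hpow : ∀ s ∈ Icc (0:ℝ) R, v s ^ β ≤ M ^ (β - 1) * v s := by
    intro s hs
    rcases eq_or_lt_of_le (hvnn s hs) with h0 | h0
    · rw [← h0, Real.zero_rpow hβpos.ne', mul_zero]
    · have hsplit : v s ^ β = v s ^ (β - 1) * v s := by
        rw [← Real.rpow_add_one h0.ne' (β - 1)]
        norm_num
      rw [hsplit]
      exact mul_le_mul_of_nonneg_right
        (Real.rpow_le_rpow (hvnn s hs) (hvM s hs) (by linarith : (0:ℝ) ≤ β - 1)) (hvnn s hs)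
  set L := 2 / σ ^ 2 * (K * M ^ (β - 1)) with hLdef
  have hL0 : 0 ≤ L := by positivity
  -- the key bound on Ioc
  have hvleq : ∀ t ∈ Ioc (0:ℝ) R, v t ≤ L * F t := by
    intro t htR
    have h0 : (0:ℝ) < t := htR.1
    have htpow : (0:ℝ) < t ^ (N - 1) := pow_pos h0 _
    -- integral comparison
    have hmono : (∫ s in (0:ℝ)..t, s ^ (N - 1) * (K * v s ^ β)) ≤
        ∫ s in (0:ℝ)..t, t ^ (N - 1) * (K * M ^ (β - 1)) * w s := by
      apply intervalIntegral.integral_mono_on h0.le (hint _ hg2 t htR)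
      · exact (continuous_const.mul hwcont).intervalIntegrable _ _
      intro s hs
      have hsR : s ∈ Icc (0:ℝ) R := ⟨hs.1, hs.2.trans htR.2⟩
      rw [hweq s hsR]
      have h1 : s ^ (N - 1) ≤ t ^ (N - 1) := pow_le_pow_left₀ hs.1 hs.2 _
      have h2 : K * v s ^ β ≤ K * (M ^ (β - 1) * v s) :=
        mul_le_mul_of_nonneg_left (hpow s hsR) hKpos.le
      have h3 : (0:ℝ) ≤ K * v s ^ β :=
        mul_nonneg hKpos.le (Real.rpow_nonneg (hvnn s hsR) _)
      calc s ^ (N - 1) * (K * v s ^ β) ≤ t ^ (N - 1) * (K * (M ^ (β - 1) * v s)) :=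
            mul_le_mul h1 h2 h3 htpow.le
        _ = t ^ (N - 1) * (K * M ^ (β - 1)) * v s := by ring
    have hvt : v t ≤ 2 / (σ ^ 2 * t ^ (N - 1)) *
        ∫ s in (0:ℝ)..t, t ^ (N - 1) * (K * M ^ (β - 1)) * w s := by
      refine le_trans (part1 t htR) ?_
      apply mul_le_mul_of_nonneg_left hmono
      positivity
    rw [intervalIntegral.integral_const_mul] at hvt
    calc v t ≤ 2 / (σ ^ 2 * t ^ (N - 1)) * (t ^ (N - 1) * (K * M ^ (β - 1)) * F t) := hvt
      _ = L * F t := by rw [hLdef]; field_simp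
  have hbound : ∀ t ∈ Ico (0:ℝ) R, ‖w t‖ ≤ L * ‖F t‖ + 0 := by
    intro t ht
    rw [add_zero, Real.norm_of_nonneg (hwnn t),
      Real.norm_of_nonneg (hFnn t ⟨ht.1, ht.2.le⟩), hweq t ⟨ht.1, ht.2.le⟩]
    rcases eq_or_lt_of_le ht.1 with h0 | h0
    · rw [← h0, hv0]
      exact mul_nonneg hL0 (hFnn 0 ⟨le_rfl, hR.le⟩)
    · exact hvleq t ⟨h0, ht.2.le⟩
  -- apply Gronwall
  have hgr := norm_le_gronwallBound_of_norm_deriv_right_le (a := 0) (b := R)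
    (f := F) (f' := w) (δ := 0) (K := L) (ε := 0)
    hFcont.continuousOn (fun t _ => (hFd t).hasDerivWithinAt)
    (by simp [hFdef]) hbound
  have hF0 : ∀ t ∈ Icc (0:ℝ) R, F t = 0 := by
    intro t ht
    have := hgr t ht
    rw [gronwallBound_ε0, zero_mul] at this
    have := norm_le_zero_iff.mp this
    exact this
  intro r hr
  rcases eq_or_lt_of_le hr.1 with h0 | h0
  · rw [← h0]; exact hv0
  have hrR : r ∈ Ioc (0:ℝ) R := ⟨h0, hr.2⟩
  refine le_antisymm ?_ (hvnn r hr)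
  calc v r ≤ L * F r := hvleq r hrR
    _ = 0 := by rw [hF0 r hr, mul_zero]
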